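/- Weakening of frozen variables: if t ⇒^{φ,μ}_ρ t' in λ_sn+ and φ ⊆ φ', and if ρ = sub(x,v) then x ∉ φ', then t ⇒^{φ',μ}_ρ t'. -/

import Mathlib

inductive Tm : Type
  | var : ℕ → Tm
  | lam : ℕ → Tm → Tm
  | app : Tm → Tm → Tm
  | es  : ℕ → Tm → Tm → Tm
  deriving DecidableEq

/-- Meta-level substitution `t{x := u}`. -/
def subst (x : ℕ) (u : Tm) : Tm → Tm
  | .var y => if y = x then u else .var y
  | .lam y t => if y = x then .lam y t else .lam y (subst x u t)
  | .app t s => .app (subst x u t) (subst x u s)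
  | .es y t s =>
      if y = x then .es y t (subst x u s)
      else .es y (subst x u t) (subst x u s)

/-- Unfolding `t★`. -/
def unfold : Tm → Tm
  | .var x => .var x
  | .lam x t => .lam x (unfold t)
  | .app t u => .app (unfold t) (unfold u)
  | .es x t u => subst x (unfold u) (unfold t)

/-- β-reduction of the pure λ-calculus. -/
inductive Beta : Tm → Tm → Prop
  | beta (x : ℕ) (t u : Tm) : Beta (.app (.lam x t) u) (subst x u t)
  | appL {t t' : Tm} (u : Tm) : Beta t t' → Beta (.app t u) (.app t' u)
  | appR (t : Tm) {u u' : Tm} : Beta u u' → Beta (.app t u) (.app t u')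
  | lam (x : ℕ) {t t' : Tm} : Beta t t' → Beta (.lam x t) (.lam x t')

/-- Free variables. -/
def fv : Tm → Set ℕ
  | .var x => {x}
  | .lam x t => fv t \ {x}
  | .app t u => fv t ∪ fv u
  | .es x t u => (fv t \ {x}) ∪ fv u

/-- Rule kinds. -/
inductive Rule : Type
  | db : Rule
  | lsv : Rule
  | idr : ℕ → Rule
  | sub : ℕ → Tm → Rule

/-- Values are abstractions. -/
def IsValue : Tm → Prop := fun t => ∃ x b, t = .lam x b

/-- Structures under a set `φ` of frozen variables. -/
inductive Struct : Set ℕ → Tm → Prop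
  | var {φ x} : x ∈ φ → Struct φ (.var x)
  | app {φ t} (u : Tm) : Struct φ t → Struct φ (.app t u)
  | es {φ t} (x : ℕ) (u : Tm) : Struct φ t → Struct φ (.es x t u)
  | esS {φ t u} (x : ℕ) :
      Struct (insert x φ) t → Struct φ u → Struct φ (.es x t u)

/-- Auxiliary dB reduction (β at a distance). -/
inductive AuxDB : Tm → Tm → Prop
  | base (x : ℕ) (t u : Tm) : AuxDB (.app (.lam x t) u) (.es x t u)
  | sigma {t u s : Tm} (x : ℕ) (w : Tm) :
      AuxDB (.app t u) s → AuxDB (.app (.es x t w) u) (.es x s w)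

/-- Local normal forms `LNF φ ω μ t`. -/
inductive LNF : Set ℕ → Set ℕ → Bool → Tm → Prop
  | var {φ ω x} (μ : Bool) : x ∈ φ ∪ ω → LNF φ ω μ (.var x)
  | absTop {φ ω t} (x : ℕ) :
      LNF (insert x φ) ω true t → LNF φ ω true (.lam x t)
  | absBot {φ ω t} (x : ℕ) :
      LNF φ (insert x ω) false t → LNF φ ω false (.lam x t)
  | es {φ ω μ t} (x : ℕ) (u : Tm) : LNF φ ω μ t → LNF φ ω μ (.es x t u)
  | appPhi {φ ω μ t u} :
      LNF φ ω μ t → Struct φ t → LNF φ ω true u → LNF φ ω μ (.app t u)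
  | appOmega {φ ω μ t} (u : Tm) :
      LNF φ ω μ t → Struct ω t → LNF φ ω μ (.app t u)
  | esPhi {φ ω μ t u} (x : ℕ) :
      LNF (insert x φ) ω μ t → LNF φ ω false u → Struct φ u →
      LNF φ ω μ (.es x t u)
  | esOmega {φ ω μ t u} (x : ℕ) :
      LNF φ (insert x ω) μ t → Struct ω u → LNF φ ω μ (.es x t u)

mutual
/-- The reduction `t ⇒^{φ,μ}_ρ t'` of the restricted calculus λ_sn+
(identical to λ_sn except that lsv-base requires the substituted value to
be a local normal form). -/
inductive PRed : Rule → Set ℕ → Bool → Tm → Tm → Prop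
  | appLeft {ρ φ t t'} (μ : Bool) (u : Tm) :
      PRed ρ φ false t t' → PRed ρ φ μ (.app t u) (.app t' u)
  | appRight {ρ φ u u'} (μ : Bool) {t : Tm} :
      Struct φ t → PRed ρ φ true u u' → PRed ρ φ μ (.app t u) (.app t u')
  | absTop {ρ φ t t'} (x : ℕ) :
      PRed ρ (insert x φ) true t t' → PRed ρ φ true (.lam x t) (.lam x t')
  | absBot {ρ φ t t'} (x : ℕ) :
      PRed ρ φ false t t' → PRed ρ φ false (.lam x t) (.lam x t')
  | esLeft {ρ φ μ t t'} (x : ℕ) (u : Tm) :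
      PRed ρ φ μ t t' → PRed ρ φ μ (.es x t u) (.es x t' u)
  | esLeftS {ρ φ μ t t' u} (x : ℕ) :
      PRed ρ (insert x φ) μ t t' → Struct φ u →
      PRed ρ φ μ (.es x t u) (.es x t' u)
  | esRight {ρ φ μ u u'} (x : ℕ) {t : Tm} :
      PRed (.idr x) φ μ t t → PRed ρ φ false u u' →
      PRed ρ φ μ (.es x t u) (.es x t u')
  | idr (φ : Set ℕ) (μ : Bool) (x : ℕ) : PRed (.idr x) φ μ (.var x) (.var x)
  | sub (φ : Set ℕ) (μ : Bool) (x : ℕ) (v : Tm) : PRed (.sub x v) φ μ (.var x) v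
  | db {φ μ t t'} : AuxDB t t' → PRed .db φ μ t t'
  | lsv {φ μ t t'} : PAuxLSV φ μ t t' → PRed .lsv φ μ t t'

/-- Auxiliary lsv reduction of λ_sn+: the base case additionally requires
the substituted value to be in local normal form `LNF φ ∅ ⊥`. -/
inductive PAuxLSV : Set ℕ → Bool → Tm → Tm → Prop
  | base {φ μ t t'} (x : ℕ) {v : Tm} :
      PRed (.sub x v) φ μ t t' → IsValue v → LNF φ ∅ false v →
      PAuxLSV φ μ (.es x t v) (.es x t' v)
  | sigma {φ μ t u t'} (x y : ℕ) (w : Tm) :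
      PAuxLSV φ μ (.es x t u) t' →
      PAuxLSV φ μ (.es x t (.es y u w)) (.es y t' w)
  | sigmaS {φ μ t u t' w} (x y : ℕ) :
      PAuxLSV (insert y φ) μ (.es x t u) t' → Struct φ w →
      PAuxLSV φ μ (.es x t (.es y u w)) (.es y t' w)
end

/-- The variable a `sub`/`id` rule kind applies to, if any. -/
def Rule.varOf : Rule → Option ℕ
  | .db => none
  | .lsv => none
  | .idr x => some x
  | .sub x _ => some x

/-! Frozen variables occur in the rules only through the side conditions `x ∈ φ` of `Struct`
and `LNF`, and every rule passes `φ` (possibly enlarged by a bound variable) unchanged to its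
premises, so enlarging `φ` preserves derivations. -/

theorem Struct.mono {φ φ' : Set ℕ} {t : Tm} (h : Struct φ t) (hs : φ ⊆ φ') :
    Struct φ' t := by
  induction h generalizing φ' with
  | var hx => exact .var (hs hx)
  | app u _ ih => exact .app u (ih hs)
  | es x u _ ih => exact .es x u (ih hs)
  | esS x _ _ iht ihu => exact .esS x (iht (Set.insert_subset_insert hs)) (ihu hs)

theorem LNF.mono {φ φ' ω ω' : Set ℕ} {μ : Bool} {t : Tm} (h : LNF φ ω μ t)
    (hφ : φ ⊆ φ') (hω : ω ⊆ ω') : LNF φ' ω' μ t := by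
  induction h generalizing φ' ω' with
  | var μ hx => exact .var μ (Set.union_subset_union hφ hω hx)
  | absTop x _ ih => exact .absTop x (ih (Set.insert_subset_insert hφ) hω)
  | absBot x _ ih => exact .absBot x (ih hφ (Set.insert_subset_insert hω))
  | es x u _ ih => exact .es x u (ih hφ hω)
  | appPhi _ hS _ iht ihu => exact .appPhi (iht hφ hω) (hS.mono hφ) (ihu hφ hω)
  | appOmega u _ hS ih => exact .appOmega u (ih hφ hω) (hS.mono hω)
  | esPhi x _ _ hS iht ihu =>
      exact .esPhi x (iht (Set.insert_subset_insert hφ) hω) (ihu hφ hω) (hS.mono hφ)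
  | esOmega x _ hS ih =>
      exact .esOmega x (ih hφ (Set.insert_subset_insert hω)) (hS.mono hω)

mutual

theorem PRed.mono {ρ : Rule} {φ φ' : Set ℕ} {μ : Bool} {t t' : Tm}
    (h : PRed ρ φ μ t t') (hs : φ ⊆ φ') : PRed ρ φ' μ t t' :=
  match h with
  | .appLeft μ u h => .appLeft μ u (h.mono hs)
  | .appRight μ hS h => .appRight μ (hS.mono hs) (h.mono hs)
  | .absTop x h => .absTop x (h.mono (Set.insert_subset_insert hs))
  | .absBot x h => .absBot x (h.mono hs)
  | .esLeft x u h => .esLeft x u (h.mono hs)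
  | .esLeftS x h hS => .esLeftS x (h.mono (Set.insert_subset_insert hs)) (hS.mono hs)
  | .esRight x hid h => .esRight x (hid.mono hs) (h.mono hs)
  | .idr _ μ x => .idr _ μ x
  | .sub _ μ x v => .sub _ μ x v
  | .db h => .db h
  | .lsv h => .lsv (h.mono hs)

theorem PAuxLSV.mono {φ φ' : Set ℕ} {μ : Bool} {t t' : Tm}
    (h : PAuxLSV φ μ t t') (hs : φ ⊆ φ') : PAuxLSV φ' μ t t' :=
  match h with
  | .base x h hv hlnf => .base x (h.mono hs) hv (hlnf.mono hs subset_rfl)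
  | .sigma x y w h => .sigma x y w (h.mono hs)
  | .sigmaS x y h hS => .sigmaS x y (h.mono (Set.insert_subset_insert hs)) (hS.mono hs)

end

/-- Weakening of frozen variables. -/
theorem pred_weakening {φ φ' : Set ℕ} {μ : Bool} {ρ : Rule} {t t' : Tm}
    (hred : PRed ρ φ μ t t') (hsub : φ ⊆ φ')
    (hρ : ∀ x v, ρ = .sub x v → x ∉ φ') :
    PRed ρ φ' μ t t' :=
  hred.mono hsub
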